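/- arXiv:0902.2322 — 2 statements merged into one kernel-verified Lean document; each statement's English description precedes it below -/
import Mathlib

section
/- Let X ⊆ P^n_k be an arithmetically Cohen–Macaulay closed subscheme of pure dimension s > 0. Then reg(X) is the smallest nonnegative integer r such that H^s(X, O_X(r-s-1)) = 0. -/
/-!
STATEMENT 4 (Proposition 2.4). Let `X ⊆ P^n_k` be an arithmetically
Cohen–Macaulay closed subscheme of pure dimension `s > 0`.  Then `reg(X)` is
the smallest nonnegative integer `r` such that `H^s(X, O_X(r-s-1)) = 0`.

Setup as in the previous statements; `XisPn` is the proposition "`X = P^n`",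
in which case `reg(X) = 1` by convention, the ideal sheaf vanishes, and
`O_X = O_{P^n}`.
-/

/-- A sheaf with cohomology dimension function `hI` is `m`-regular. -/
def mRegular (hI : ℕ → ℤ → ℕ) (m : ℤ) : Prop := ∀ i : ℕ, 0 < i → hI i (m - (i : ℤ)) = 0

/-- The Castelnuovo–Mumford regularity: the smallest `m` such that the sheaf is
`m`-regular. -/
noncomputable def regOf (hI : ℕ → ℤ → ℕ) : ℤ := sInf {m : ℤ | mRegular hI m}

open scoped Classical in
theorem reg_acm
    (n s : ℕ) (hs : 0 < s) (hsn : s ≤ n)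
    (Sh : Type) (h : ℕ → Sh → ℕ) (ses : Sh → Sh → Sh → Prop)
    (IX OX OP : ℤ → Sh)
    -- the proposition "`X = P^n`"; in that case `reg(X) := 1` by definition
    (XisPn : Prop)
    (hPn : XisPn ↔ s = n)
    (hPnI : XisPn → ∀ (i : ℕ) (d : ℤ), h i (IX d) = 0)
    (hPnO : XisPn → ∀ (i : ℕ) (d : ℤ), h i (OX d) = h i (OP d))
    -- the twisted ideal sheaf sequences `0 → I_X(d) → O_{P^n}(d) → O_X(d) → 0`
    (sesX : ∀ d : ℤ, ses (IX d) (OP d) (OX d))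
    -- dimension inequalities from the long exact cohomology sequence
    (les1 : ∀ A B C, ses A B C → ∀ i : ℕ, h i B ≤ h i A + h i C)
    (les2 : ∀ A B C, ses A B C → ∀ i : ℕ, h i C ≤ h i B + h (i + 1) A)
    (les3 : ∀ A B C, ses A B C → ∀ i : ℕ, h (i + 1) A ≤ h i C + h (i + 1) B)
    -- Serre's computation
    (serre_mid : ∀ i : ℕ, 1 ≤ i → i < n → ∀ d : ℤ, h i (OP d) = 0)
    (serre_top : ∀ d : ℤ, h n (OP d) = 0 ↔ -(n : ℤ) ≤ d)
    -- `X` is arithmetically Cohen–Macaulay: `H^j(I_X(d)) = 0` for `1 ≤ j ≤ s`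
    (acm : ∀ j : ℕ, 1 ≤ j → j ≤ s → ∀ d : ℤ, h j (IX d) = 0)
    -- `X` has pure dimension `s`: `H^i(O_X(d)) = 0` for `i > s`
    (hdim : ∀ i : ℕ, s < i → ∀ d : ℤ, h i (OX d) = 0)
    -- cohomology vanishes above the dimension of `P^n`
    (hbig : ∀ i : ℕ, n < i → ∀ F : Sh, h i F = 0)
    -- if `X ≠ P^n`: regularity is nonnegative, attained, and upward closed
    (hregnn : ¬ XisPn → ∀ m : ℤ, mRegular (fun i d => h i (IX d)) m → 0 ≤ m)
    (hregex : ¬ XisPn → ∃ m : ℤ, mRegular (fun i d => h i (IX d)) m)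
    (hregmono : ¬ XisPn → ∀ m m' : ℤ, mRegular (fun i d => h i (IX d)) m → m ≤ m' →
      mRegular (fun i d => h i (IX d)) m') :
    IsLeast {r : ℤ | 0 ≤ r ∧ h s (OX (r - s - 1)) = 0}
      (if XisPn then 1 else regOf (fun i d => h i (IX d))) := by

  by_cases hx : XisPn
  · simp only [if_pos hx]
    have hsn' : s = n := hPn.mp hx
    constructor
    · refine ⟨by norm_num, ?_⟩
      rw [hPnO hx, hsn', serre_top]
      omega
    · rintro r ⟨hr0, hr⟩
      rw [hPnO hx, hsn'] at hr
      have := (serre_top _).mp hr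
      omega
  · simp only [if_neg hx]
    have hslt : s < n := lt_of_le_of_ne hsn (fun e => hx (hPn.mpr e))
    have hne : {m : ℤ | mRegular (fun i d => h i (IX d)) m}.Nonempty := hregex hx
    have hbdd : BddBelow {m : ℤ | mRegular (fun i d => h i (IX d)) m} :=
      ⟨0, fun m hm => hregnn hx m hm⟩
    have hmem : regOf (fun i d => h i (IX d)) ∈
        {m : ℤ | mRegular (fun i d => h i (IX d)) m} := by
      rw [regOf]; exact Int.csInf_mem hne hbdd
    set r₀ := regOf (fun i d => h i (IX d)) with hr₀def
    have h0r₀ : 0 ≤ r₀ := hregnn hx r₀ hmem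
    constructor
    · refine ⟨h0r₀, ?_⟩
      have hIX : h (s + 1) (IX (r₀ - ((s : ℤ) + 1))) = 0 := by
        have := hmem (s + 1) (by omega)
        simpa using this
      have hles := les2 _ _ _ (sesX (r₀ - s - 1)) s
      have hOP : h s (OP (r₀ - s - 1)) = 0 := serre_mid s hs hslt _
      have harg : r₀ - (s : ℤ) - 1 = r₀ - ((s : ℤ) + 1) := by ring
      rw [harg] at hles hOP ⊢
      omega
    · rintro r ⟨hr0, hrv⟩
      have hrmem : mRegular (fun i d => h i (IX d)) r := by
        intro i hi
        by_cases h1 : i ≤ s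
        · exact acm i hi h1 _
        · by_cases h2 : i ≤ n
          · obtain ⟨j, rfl⟩ : ∃ j, i = j + 1 := ⟨i - 1, by omega⟩
            have hOP : h (j + 1) (OP (r - ((j : ℤ) + 1))) = 0 := by
              rcases lt_or_eq_of_le h2 with hlt | heq
              · exact serre_mid (j + 1) (by omega) hlt _
              · rw [show ((j : ℕ) + 1 : ℕ) = n from heq, serre_top]
                omega
            have hOX : h j (OX (r - ((j : ℤ) + 1))) = 0 := by
              by_cases hj : j = s
              · subst hj
                have harg : r - ((j : ℤ) + 1) = r - (j : ℤ) - 1 := by ring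
                rw [harg]; exact hrv
              · exact hdim j (by omega) _
            have hles := les3 _ _ _ (sesX (r - ((j : ℤ) + 1))) j
            have harg : r - (((j : ℕ) + 1 : ℕ) : ℤ) = r - ((j : ℤ) + 1) := by push_cast; ring
            simp only [harg]
            omega
          · exact hbig i (by omega) _
      exact csInf_le hbdd hrmem
end

section
/- Let η : Ω^1_{P^n_k} → O_{P^n}(m-1) be a rank-1 Pfaff field on P^n_k, n ≥ 2, with m ≥ 1, whose singular locus S (the degeneracy scheme of η) is finite. Then reg(S) = nm - n + 2. -/
theorem reg_singular_locus_pfaff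
    (n m : ℕ) (hn : 2 ≤ n) (hm : 1 ≤ m)
    (Sh : Type) (h : ℕ → Sh → ℕ) (ses : Sh → Sh → Sh → Prop)
    (OP OS IS : ℤ → Sh) (Ω : ℕ → ℤ → Sh)
    -- dimension inequalities from the long exact cohomology sequence
    (les1 : ∀ A B C, ses A B C → ∀ i : ℕ, h i B ≤ h i A + h i C)
    (les2 : ∀ A B C, ses A B C → ∀ i : ℕ, h i C ≤ h i B + h (i + 1) A)
    (les3 : ∀ A B C, ses A B C → ∀ i : ℕ, h (i + 1) A ≤ h i C + h (i + 1) B)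
    -- the images of the Koszul differentials of `η(1-m)`, twisted
    (Ik : ℕ → ℤ → Sh)
    (hI1 : ∀ d : ℤ, Ik 1 d = IS d)
    -- the Koszul complex is exact in positive degrees (`S` finite of the
    -- expected codimension, `P^n` Cohen–Macaulay), broken into s.e.s.'s
    (sesK : ∀ j : ℕ, 1 ≤ j → j ≤ n - 1 → ∀ d : ℤ,
      ses (Ik (j + 1) d) (Ω j ((j : ℤ) - (j : ℤ) * m + d)) (Ik j d))
    -- `Ik n ≅ Ω^n(n - nm)`
    (hIn : ∀ (i : ℕ) (d : ℤ), h i (Ik n d) = h i (Ω n ((n : ℤ) - (n : ℤ) * m + d)))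
    -- Bott vanishing: `H^j(Ω^j(t)) = 0` for `t > 0`, `H^{j+1}(Ω^j(t)) = 0` for `t ≥ 0`
    (bott1 : ∀ (j : ℕ) (t : ℤ), 1 ≤ j → 0 < t → h j (Ω j t) = 0)
    (bott2 : ∀ (j : ℕ) (t : ℤ), 0 ≤ t → h (j + 1) (Ω j t) = 0)
    -- Serre duality: `H^n(Ω^n(t)) = H^0(O(-t))^*` vanishes iff `t > 0`
    (bottn : ∀ t : ℤ, h n (Ω n t) = 0 ↔ 0 < t)
    -- `S` is finite: `H^i(O_S(d)) = 0` for `i ≥ 1`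
    (hfin : ∀ i : ℕ, 1 ≤ i → ∀ d : ℤ, h i (OS d) = 0)
    (sesS : ∀ d : ℤ, ses (IS d) (OP d) (OS d))
    -- Serre's computation
    (serre_mid : ∀ i : ℕ, 1 ≤ i → i < n → ∀ d : ℤ, h i (OP d) = 0)
    (serre_top : ∀ d : ℤ, -(n : ℤ) ≤ d → h n (OP d) = 0)
    -- cohomology vanishes above the dimension of `P^n`
    (hbig : ∀ i : ℕ, n < i → ∀ F : Sh, h i F = 0)
    -- Mumford: `m`-regularity is upward closed in `m`
    (hregmono : ∀ m₁ m₂ : ℤ, mRegular (fun i d => h i (IS d)) m₁ → m₁ ≤ m₂ →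
      mRegular (fun i d => h i (IS d)) m₂) :
    regOf (fun i d => h i (IS d)) = (n : ℤ) * m - n + 2 := by
  have hm' : (1 : ℤ) ≤ (m : ℤ) := by exact_mod_cast hm
  have hn' : (2 : ℤ) ≤ (n : ℤ) := by exact_mod_cast hn
  set r₀ : ℤ := (n : ℤ) * m - n + 2 with hr₀
  -- Nonvanishing of h^1(I_S(nm - n))
  have key1 : h 1 (IS ((n : ℤ) * m - n)) ≠ 0 := by
    set d : ℤ := (n : ℤ) * m - n with hd
    have Q : ∀ j : ℕ, 1 ≤ j → j ≤ n → h j (Ik j d) ≤ h 1 (Ik 1 d) := by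
      intro j
      induction j with
      | zero => intro h1 _; omega
      | succ j ih =>
        intro _ hjn
        rcases Nat.eq_zero_or_pos j with hj0 | hj1
        · subst hj0; exact le_refl _
        · have hjn1 : j ≤ n - 1 := by omega
          have hses := sesK j hj1 hjn1 d
          have hle := les3 _ _ _ hses j
          have ht : (0 : ℤ) ≤ (j : ℤ) - (j : ℤ) * m + d := by
            have hjn' : (j : ℤ) ≤ (n : ℤ) := by exact_mod_cast (le_trans (Nat.le_succ j) hjn)
            have : (0 : ℤ) ≤ ((n : ℤ) - j) * ((m : ℤ) - 1) :=
              mul_nonneg (by linarith) (by linarith)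
            nlinarith [this]
          rw [bott2 j _ ht] at hle
          calc h (j + 1) (Ik (j + 1) d) ≤ h j (Ik j d) + 0 := hle
            _ = h j (Ik j d) := by omega
            _ ≤ h 1 (Ik 1 d) := ih hj1 (by omega)
    have hQn := Q n (by omega) le_rfl
    rw [hIn n d] at hQn
    have h0 : (n : ℤ) - (n : ℤ) * m + d = 0 := by rw [hd]; ring
    rw [h0] at hQn
    have hne : h n (Ω n 0) ≠ 0 := by
      intro hc; have := (bottn 0).mp hc; omega
    rw [hI1] at hQn
    omega
  -- r₀-regularity
  have reg₀ : mRegular (fun i d => h i (IS d)) r₀ := by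
    intro i hi
    simp only
    rcases Nat.lt_or_ge i 2 with hi2 | hi2
    · -- i = 1 : Koszul chase
      have hi1 : i = 1 := by omega
      subst hi1
      set d : ℤ := r₀ - 1 with hd
      have P : ∀ k : ℕ, k ≤ n - 1 → h (n - k) (Ik (n - k) d) = 0 := by
        intro k
        induction k with
        | zero =>
          intro _
          simp only [Nat.sub_zero]
          rw [hIn n d]
          have h1 : (n : ℤ) - (n : ℤ) * m + d = 1 := by rw [hd, hr₀]; ring
          rw [h1]
          exact (bottn 1).mpr one_pos
        | succ k ih =>
          intro hk
          set j : ℕ := n - (k + 1) with hj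
          have hj1 : 1 ≤ j := by omega
          have hjn1 : j ≤ n - 1 := by omega
          have hses := sesK j hj1 hjn1 d
          have hle := les2 _ _ _ hses j
          have ht : (0 : ℤ) < (j : ℤ) - (j : ℤ) * m + d := by
            have hjn' : (j : ℤ) ≤ (n : ℤ) := by
              exact_mod_cast (show j ≤ n by omega)
            have : (0 : ℤ) ≤ ((n : ℤ) - j) * ((m : ℤ) - 1) :=
              mul_nonneg (by linarith) (by linarith)
            have hd1 : d = (n : ℤ) * m - n + 1 := by rw [hd, hr₀]; ring
            nlinarith [this]
          rw [bott1 j _ hj1 ht] at hle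
          have hjk : j + 1 = n - k := by omega
          rw [hjk] at hle
          rw [ih (by omega)] at hle
          omega
      have hP := P (n - 1) le_rfl
      have hnn : n - (n - 1) = 1 := by omega
      rw [hnn, hI1] at hP
      have hdd : r₀ - (1 : ℕ) = d := by push_cast; rw [hd]
      rw [hdd]
      exact hP
    · -- i ≥ 2 : use the sequence 0 → I_S → O → O_S → 0
      obtain ⟨i', rfl⟩ : ∃ i' : ℕ, i = i' + 1 := ⟨i - 1, by omega⟩
      have hi'1 : 1 ≤ i' := by omega
      set d : ℤ := r₀ - (i' + 1 : ℕ) with hd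
      have hle := les3 _ _ _ (sesS d) i'
      rw [hfin i' hi'1 d] at hle
      have hOP : h (i' + 1) (OP d) = 0 := by
        rcases lt_trichotomy (i' + 1) n with hlt | heq | hgt
        · exact serre_mid (i' + 1) (by omega) hlt d
        · rw [heq]
          apply serre_top
          have hdn : d = (n : ℤ) * m - n + 2 - n := by
            rw [hd, hr₀, heq]
          rw [hdn]
          nlinarith [mul_le_mul_of_nonneg_left hm' (by linarith : (0:ℤ) ≤ (n:ℤ))]
        · exact hbig (i' + 1) hgt _
      omega
  -- (r₀ - 1) is not regular
  have notreg : ¬ mRegular (fun i d => h i (IS d)) (r₀ - 1) := by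
    intro hreg
    have := hreg 1 one_pos
    simp only at this
    have heq : r₀ - 1 - (1 : ℕ) = (n : ℤ) * m - n := by rw [hr₀]; push_cast; ring
    rw [heq] at this
    exact key1 this
  -- identify the set of regular twists
  have hset : {m' : ℤ | mRegular (fun i d => h i (IS d)) m'} = Set.Ici r₀ := by
    ext x
    constructor
    · intro hx
      by_contra hxr
      have hxr' : x ≤ r₀ - 1 := by
        simp only [Set.mem_Ici, not_le] at hxr; omega
      exact notreg (hregmono x (r₀ - 1) hx hxr')
    · intro hx
      exact hregmono r₀ x reg₀ hx
  rw [regOf, hset, csInf_Ici]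
end
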